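/- arXiv:2510.02667 — 3 statements merged into one kernel-verified Lean document; each statement's English description precedes it below -/
import Mathlib

section
/- For any square matrix B over the complex numbers and any natural number m ≥ 1, the numerical radius satisfies the power inequality r₊(B^m) ≤ (r₊(B))^m. -/
open Complex Matrix
open scoped InnerProductSpace

noncomputable def numRange {N : ℕ} (B : Matrix (Fin N) (Fin N) ℂ) : Set ℂ :=
  {z | ∃ x : EuclideanSpace ℂ (Fin N), ‖x‖ = 1 ∧ z = ⟪x, Matrix.toEuclideanLin B x⟫_ℂ}

noncomputable def numRadius {N : ℕ} (B : Matrix (Fin N) (Fin N) ℂ) : ℝ :=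
  sSup {r : ℝ | ∃ x : EuclideanSpace ℂ (Fin N), ‖x‖ = 1 ∧
    r = ‖⟪x, Matrix.toEuclideanLin B x⟫_ℂ‖}

noncomputable def opNorm {N : ℕ} (B : Matrix (Fin N) (Fin N) ℂ) : ℝ :=
  ‖Matrix.toEuclideanCLM (𝕜 := ℂ) B‖

noncomputable def hermPart {N : ℕ} (D : Matrix (Fin N) (Fin N) ℂ) : Matrix (Fin N) (Fin N) ℂ :=
  (2 : ℂ)⁻¹ • (D + Dᴴ)

theorem hermPart_isHermitian {N : ℕ} (D : Matrix (Fin N) (Fin N) ℂ) :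
    (hermPart D).IsHermitian := by
  unfold hermPart Matrix.IsHermitian
  rw [Matrix.conjTranspose_smul, Matrix.conjTranspose_add, Matrix.conjTranspose_conjTranspose]
  simp [add_comm]

noncomputable def lamMax {N : ℕ} (M : Matrix (Fin N) (Fin N) ℂ) (hM : M.IsHermitian) : ℝ :=
  ⨆ i, hM.eigenvalues i

noncomputable def lamMin {N : ℕ} (M : Matrix (Fin N) (Fin N) ℂ) (hM : M.IsHermitian) : ℝ :=
  ⨅ i, hM.eigenvalues i


lemma isUnit_of_injective' {N : ℕ}
    (f : EuclideanSpace ℂ (Fin N) →L[ℂ] EuclideanSpace ℂ (Fin N))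
    (hf : Function.Injective f) : IsUnit f := by
  have hbij : Function.Bijective (f : EuclideanSpace ℂ (Fin N) →ₗ[ℂ] EuclideanSpace ℂ (Fin N)) :=
    ⟨hf, LinearMap.injective_iff_surjective.mp hf⟩
  let e := (LinearEquiv.ofBijective (f : EuclideanSpace ℂ (Fin N) →ₗ[ℂ] EuclideanSpace ℂ (Fin N)) hbij).toContinuousLinearEquiv
  refine ⟨e.toUnit, ?_⟩
  ext x
  rfl

set_option maxHeartbeats 1000000

lemma core {N : ℕ} (T : EuclideanSpace ℂ (Fin N) →L[ℂ] EuclideanSpace ℂ (Fin N))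
    (H : ∀ x : EuclideanSpace ℂ (Fin N), ‖⟪x, T x⟫_ℂ‖ ≤ ‖x‖ ^ 2)
    {n : ℕ} (hn : 1 ≤ n) (u : EuclideanSpace ℂ (Fin N)) :
    ‖⟪u, (T ^ n) u⟫_ℂ‖ ≤ ‖u‖ ^ 2 := by
  have habs : ∀ y : EuclideanSpace ℂ (Fin N), ‖⟪T y, y⟫_ℂ‖ ≤ ‖y‖ ^ 2 := by
    intro y
    rw [← inner_conj_symm, Complex.norm_conj]
    exact H y
  -- Step A : accretivity of 1 - c•T for |c| ≤ 1
  have hA : ∀ c : ℂ, ‖c‖ ≤ 1 → ∀ y : EuclideanSpace ℂ (Fin N),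
      0 ≤ (⟪((1 : EuclideanSpace ℂ (Fin N) →L[ℂ] EuclideanSpace ℂ (Fin N)) - c • T) y, y⟫_ℂ).re := by
    intro c hc y
    have h1 : ((1 : EuclideanSpace ℂ (Fin N) →L[ℂ] EuclideanSpace ℂ (Fin N)) - c • T) y
        = y - c • T y := by simp
    rw [h1, inner_sub_left, inner_smul_left]
    have h2 : (⟪y, y⟫_ℂ).re = ‖y‖ ^ 2 := by
      exact inner_self_eq_norm_sq (𝕜 := ℂ) y
    have h3 : ((starRingEnd ℂ) c * ⟪T y, y⟫_ℂ).re ≤ ‖y‖ ^ 2 := by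
      calc ((starRingEnd ℂ) c * ⟪T y, y⟫_ℂ).re
          ≤ ‖(starRingEnd ℂ) c * ⟪T y, y⟫_ℂ‖ := Complex.re_le_norm _
        _ = ‖c‖ * ‖⟪T y, y⟫_ℂ‖ := by simp
        _ ≤ 1 * ‖y‖ ^ 2 :=
            mul_le_mul hc (habs y) (norm_nonneg _) one_pos.le
        _ = ‖y‖ ^ 2 := one_mul _
    rw [Complex.sub_re, h2]
    linarith
  -- Step B : invertibility of 1 - c•T for |c| < 1
  have hU : ∀ c : ℂ, ‖c‖ < 1 →
      IsUnit ((1 : EuclideanSpace ℂ (Fin N) →L[ℂ] EuclideanSpace ℂ (Fin N)) - c • T) := by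
    intro c hc
    apply isUnit_of_injective'
    have hker : ∀ x : EuclideanSpace ℂ (Fin N),
        ((1 : EuclideanSpace ℂ (Fin N) →L[ℂ] EuclideanSpace ℂ (Fin N)) - c • T) x = 0 → x = 0 := by
      intro x hx
      have h1 : x = c • T x := by
        have : x - c • T x = 0 := by simpa using hx
        linear_combination (norm := module) this
      have h2 : ⟪x, x⟫_ℂ = c * ⟪x, T x⟫_ℂ := by
        nth_rewrite 2 [h1]
        rw [inner_smul_right]
      have h3 : ‖x‖ ^ 2 = ‖c‖ * ‖⟪x, T x⟫_ℂ‖ := by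
        have h2' := congrArg norm h2
        rw [inner_self_eq_norm_sq_to_K] at h2'
        simpa [norm_mul] using h2'
      have h4 : ‖⟪x, T x⟫_ℂ‖ ≤ ‖x‖ ^ 2 := H x
      have h6 : ‖c‖ * ‖⟪x, T x⟫_ℂ‖ ≤ ‖c‖ * ‖x‖ ^ 2 :=
        mul_le_mul_of_nonneg_left h4 (norm_nonneg c)
      rw [← h3] at h6
      have h7 : ‖x‖ ^ 2 ≤ 0 := by nlinarith [sq_nonneg ‖x‖, norm_nonneg c]
      have h8 : ‖x‖ = 0 :=
        pow_eq_zero_iff (by norm_num : (2:ℕ) ≠ 0) |>.mp (le_antisymm h7 (sq_nonneg _))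
      exact norm_eq_zero.mp h8
    intro x y hxy
    have := hker (x - y) (by rw [map_sub, hxy, sub_self])
    exact sub_eq_zero.mp this
  -- main argument
  set d := ⟪u, (T ^ n) u⟫_ℂ with hd
  have key : ∀ w : ℂ, ‖w‖ < 1 → (w * d).re ≤ ‖u‖ ^ 2 := by
    intro w hw
    obtain ⟨z, hz⟩ := IsAlgClosed.exists_pow_nat_eq w (by omega : 0 < n)
    have hzabs : ‖z‖ < 1 := by
      by_contra hcon
      push_neg at hcon
      have h1 : (1:ℝ) ≤ ‖z‖ ^ n := one_le_pow₀ hcon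
      rw [← norm_pow, hz] at h1
      linarith
    set ζ : ℂ := Complex.exp (2 * Real.pi * Complex.I / n) with hζdef
    have hζ : IsPrimitiveRoot ζ n := Complex.isPrimitiveRoot_exp n (by omega)
    have hζ1 : ‖ζ‖ = 1 := by
      rw [hζdef, show (2 * (Real.pi:ℂ) * Complex.I / (n:ℂ))
        = ((2 * Real.pi / n : ℝ) : ℂ) * Complex.I by push_cast; ring]
      exact Complex.norm_exp_ofReal_mul_I _
    set c : ℕ → ℂ := fun j => ζ ^ j * z with hcdef
    have hcabs : ∀ j, ‖c j‖ < 1 := by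
      intro j
      rw [hcdef]
      simp only []
      rw [norm_mul, norm_pow, hζ1, one_pow, one_mul]
      exact hzabs
    have hcn : ∀ j, (c j) ^ n = z ^ n := by
      intro j
      rw [hcdef]
      simp only []
      rw [mul_pow, ← pow_mul, mul_comm j n, pow_mul, hζ.pow_eq_one, one_pow, one_mul]
    have hUa : ∀ j, IsUnit ((1 : EuclideanSpace ℂ (Fin N) →L[ℂ] EuclideanSpace ℂ (Fin N))
        - c j • T) := fun j => hU (c j) (hcabs j)
    set g : ℕ → (EuclideanSpace ℂ (Fin N) →L[ℂ] EuclideanSpace ℂ (Fin N)) :=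
      fun j => ∑ k ∈ Finset.range n, (c j) ^ k • T ^ k with hgdef
    have hfact : ∀ j, ((1 : EuclideanSpace ℂ (Fin N) →L[ℂ] EuclideanSpace ℂ (Fin N))
        - c j • T) * g j = 1 - z ^ n • T ^ n := by
      intro j
      have e1 : g j = ∑ k ∈ Finset.range n, (c j • T) ^ k := by
        simp [hgdef, smul_pow]
      rw [e1, mul_neg_geom_sum, smul_pow, hcn j]
    have hgeo : ∀ k, k ∈ Finset.range n →
        (∑ j ∈ Finset.range n, ((ζ ^ k) ^ j)) = if k = 0 then (n:ℂ) else 0 := by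
      intro k hk
      rcases eq_or_ne k 0 with rfl | hk0
      · simp
      · rw [if_neg hk0]
        have hne : ζ ^ k ≠ 1 :=
          hζ.pow_ne_one_of_pos_of_lt hk0 (Finset.mem_range.mp hk)
        rw [geom_sum_eq hne]
        have hone : (ζ ^ k) ^ n = 1 := by
          rw [← pow_mul, mul_comm, pow_mul, hζ.pow_eq_one, one_pow]
        rw [hone, sub_self, zero_div]
    have hsum : ∑ j ∈ Finset.range n, g j
        = (n : ℂ) • (1 : EuclideanSpace ℂ (Fin N) →L[ℂ] EuclideanSpace ℂ (Fin N)) := by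
      simp only [hgdef]
      rw [Finset.sum_comm]
      have hterm : ∀ k ∈ Finset.range n, (∑ j ∈ Finset.range n, (c j) ^ k • T ^ k)
          = ((∑ j ∈ Finset.range n, (ζ ^ k) ^ j) * z ^ k) • T ^ k := by
        intro k _
        rw [← Finset.sum_smul]
        congr 1
        rw [Finset.sum_mul]
        refine Finset.sum_congr rfl fun j _ => ?_
        rw [hcdef]
        simp only []
        rw [mul_pow, pow_right_comm]
      calc ∑ k ∈ Finset.range n, ∑ j ∈ Finset.range n, c j ^ k • T ^ k
          = ∑ k ∈ Finset.range n, ((∑ j ∈ Finset.range n, (ζ ^ k) ^ j) * z ^ k) • T ^ k :=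
            Finset.sum_congr rfl hterm
        _ = ∑ k ∈ Finset.range n, ((if k = 0 then (n:ℂ) else 0) * z ^ k) • T ^ k := by
            refine Finset.sum_congr rfl fun k hk => ?_
            rw [hgeo k hk]
        _ = (n : ℂ) • 1 := by
            rw [Finset.sum_eq_single 0]
            · simp
            · intro k _ hk0
              rw [if_neg hk0, zero_mul]
              exact zero_smul ℂ (T ^ k)
            · intro h0
              exact absurd (Finset.mem_range.mpr (by omega)) h0
    set v : ℕ → (EuclideanSpace ℂ (Fin N) →L[ℂ] EuclideanSpace ℂ (Fin N)) :=
      fun j => (((hUa j).unit⁻¹ : (EuclideanSpace ℂ (Fin N) →L[ℂ] EuclideanSpace ℂ (Fin N))ˣ) :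
        EuclideanSpace ℂ (Fin N) →L[ℂ] EuclideanSpace ℂ (Fin N)) with hvdef
    have hv1 : ∀ j, (1 - c j • T) * v j = 1 := fun j => (hUa j).mul_val_inv
    have hv2 : ∀ j, v j * (1 - c j • T) = 1 := fun j => (hUa j).val_inv_mul
    have hVmul : (∑ j ∈ Finset.range n, v j) * (1 - z ^ n • T ^ n) = (n : ℂ) • 1 := by
      rw [Finset.sum_mul, ← hsum]
      refine Finset.sum_congr rfl fun j _ => ?_
      rw [← hfact j, ← mul_assoc, hv2 j, one_mul]
    have hposj : ∀ j, ∀ x : EuclideanSpace ℂ (Fin N), 0 ≤ (⟪x, v j x⟫_ℂ).re := by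
      intro j x
      have hxy : (1 - c j • T) (v j x) = x := by
        rw [← ContinuousLinearMap.mul_apply, hv1 j, ContinuousLinearMap.one_apply]
      have h2 := hA (c j) (hcabs j).le (v j x)
      rw [hxy] at h2
      exact h2
    have hposV : ∀ x : EuclideanSpace ℂ (Fin N),
        0 ≤ (⟪x, (∑ j ∈ Finset.range n, v j) x⟫_ℂ).re := by
      intro x
      rw [ContinuousLinearMap.sum_apply, inner_sum, Complex.re_sum]
      exact Finset.sum_nonneg fun j _ => hposj j x
    have h0 : 0 ≤ (⟪(1 - z ^ n • T ^ n) u, u⟫_ℂ).re := by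
      have h1 := hposV ((1 - z ^ n • T ^ n) u)
      have h2 : (∑ j ∈ Finset.range n, v j) ((1 - z ^ n • T ^ n) u) = (n : ℂ) • u := by
        rw [← ContinuousLinearMap.mul_apply, hVmul, ContinuousLinearMap.smul_apply,
          ContinuousLinearMap.one_apply]
      rw [h2, inner_smul_right] at h1
      have h3 : ((n:ℂ) * ⟪(1 - z ^ n • T ^ n) u, u⟫_ℂ).re
          = (n:ℝ) * (⟪(1 - z ^ n • T ^ n) u, u⟫_ℂ).re := by
        simp [Complex.mul_re]
      rw [h3] at h1
      have hnpos : (0:ℝ) < n := by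
        have : (1:ℝ) ≤ n := by exact_mod_cast hn
        linarith
      nlinarith [h1, hnpos]
    have h4 : (1 - z ^ n • T ^ n) u = u - z ^ n • (T ^ n) u := by simp
    have h5 : (⟪u, u⟫_ℂ).re = ‖u‖ ^ 2 := inner_self_eq_norm_sq (𝕜 := ℂ) u
    rw [h4, inner_sub_left, inner_smul_left, Complex.sub_re, h5] at h0
    have h7 : (starRingEnd ℂ) (w * d) = (starRingEnd ℂ) (z ^ n) * ⟪(T ^ n) u, u⟫_ℂ := by
      rw [_root_.map_mul, ← hz, hd, inner_conj_symm]
    calc (w * d).re = ((starRingEnd ℂ) (w * d)).re := (Complex.conj_re _).symm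
      _ = ((starRingEnd ℂ) (z ^ n) * ⟪(T ^ n) u, u⟫_ℂ).re := by rw [h7]
      _ ≤ ‖u‖ ^ 2 := by linarith
  -- conclude |d| ≤ ‖u‖²
  rcases eq_or_ne d 0 with h | h
  · rw [h]
    simpa using sq_nonneg ‖u‖
  · by_contra hcon
    push_neg at hcon
    have hd0 : 0 < ‖d‖ := norm_pos_iff.mpr h
    set t : ℝ := (‖u‖ ^ 2 + ‖d‖) / (2 * ‖d‖) with ht
    have htnum : 0 < ‖u‖ ^ 2 + ‖d‖ := by positivity
    have ht0 : 0 < t := by positivity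
    have ht1 : t < 1 := by
      rw [ht, div_lt_one (by positivity)]
      nlinarith
    set w : ℂ := ((t / ‖d‖ : ℝ) : ℂ) * (starRingEnd ℂ) d with hw
    have hwabs : ‖w‖ < 1 := by
      rw [hw, norm_mul, Complex.norm_real, Real.norm_eq_abs, Complex.norm_conj,
        _root_.abs_of_nonneg (by positivity : (0:ℝ) ≤ t / ‖d‖),
        div_mul_cancel₀ _ (ne_of_gt hd0)]
      exact ht1
    have hkey := key w hwabs
    have hwd : (w * d).re = t * ‖d‖ := by
      rw [hw, mul_assoc, mul_comm ((starRingEnd ℂ) d) d, Complex.mul_conj,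
        ← Complex.ofReal_mul, Complex.ofReal_re, Complex.normSq_eq_norm_sq]
      field_simp
    rw [hwd, ht] at hkey
    have heq : (‖u‖ ^ 2 + ‖d‖) / (2 * ‖d‖) * ‖d‖
        = (‖u‖ ^ 2 + ‖d‖) / 2 := by
      field_simp
    rw [heq] at hkey
    linarith

/-- the power inequality for the numerical radius:
r₊(B^m) ≤ (r₊(B))^m for every m ≥ 1. -/
theorem numRadius_pow_le {N : ℕ} (B : Matrix (Fin N) (Fin N) ℂ) (m : ℕ) (hm : 1 ≤ m) :
    numRadius (B ^ m) ≤ (numRadius B) ^ m := by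
  classical
  set T := Matrix.toEuclideanCLM (𝕜 := ℂ) B with hT
  have hTL : ∀ x : EuclideanSpace ℂ (Fin N), Matrix.toEuclideanLin B x = T x := by
    intro x
    rw [hT, ← Matrix.coe_toEuclideanCLM_eq_toEuclideanLin]
    rfl
  set r := numRadius B with hr
  have hBdd : BddAbove {s : ℝ | ∃ x : EuclideanSpace ℂ (Fin N), ‖x‖ = 1 ∧
      s = ‖⟪x, Matrix.toEuclideanLin B x⟫_ℂ‖} := by
    refine ⟨‖T‖, ?_⟩
    rintro s ⟨x, hx, rfl⟩
    calc ‖⟪x, Matrix.toEuclideanLin B x⟫_ℂ‖ = ‖⟪x, T x⟫_ℂ‖ := by rw [hTL]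
      _ ≤ ‖x‖ * ‖T x‖ := norm_inner_le_norm _ _
      _ ≤ ‖x‖ * (‖T‖ * ‖x‖) := by
          have h1 := T.le_opNorm x
          nlinarith [norm_nonneg x]
      _ = ‖T‖ := by rw [hx]; ring
  have hmem : ∀ x : EuclideanSpace ℂ (Fin N), ‖x‖ = 1 → ‖⟪x, T x⟫_ℂ‖ ≤ r := by
    intro x hx
    apply le_csSup hBdd
    exact ⟨x, hx, by rw [hTL]⟩
  have hr0 : 0 ≤ r := by
    rcases Nat.eq_zero_or_pos N with h0 | hpos
    · subst h0
      have he : {s : ℝ | ∃ x : EuclideanSpace ℂ (Fin 0), ‖x‖ = 1 ∧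
          s = ‖⟪x, Matrix.toEuclideanLin B x⟫_ℂ‖} = ∅ := by
        ext s
        simp only [Set.mem_setOf_eq, Set.mem_empty_iff_false, iff_false, not_exists]
        rintro x ⟨hx, -⟩
        have hx0 : x = 0 := Subsingleton.elim x 0
        rw [hx0, norm_zero] at hx
        norm_num at hx
      rw [hr, numRadius, he, Real.sSup_empty]
    · set x0 : EuclideanSpace ℂ (Fin N) := EuclideanSpace.single ⟨0, hpos⟩ 1 with hx0def
      have hx0 : ‖x0‖ = 1 := by
        rw [hx0def, EuclideanSpace.norm_single, norm_one]
      exact le_trans (norm_nonneg _) (hmem x0 hx0)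
  have hTr : ∀ x : EuclideanSpace ℂ (Fin N), ‖⟪x, T x⟫_ℂ‖ ≤ r * ‖x‖ ^ 2 := by
    intro x
    rcases eq_or_ne x 0 with rfl | hx
    · simp
    · have hnx : (0:ℝ) < ‖x‖ := norm_pos_iff.mpr hx
      set a : ℂ := ((‖x‖⁻¹ : ℝ) : ℂ) with ha
      have hax : ‖a • x‖ = 1 := by
        rw [norm_smul, ha, Complex.norm_real, Real.norm_eq_abs,
          _root_.abs_of_pos (inv_pos.mpr hnx), inv_mul_cancel₀ hnx.ne']
      have h1 := hmem (a • x) hax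
      have h2 : ⟪a • x, T (a • x)⟫_ℂ = (starRingEnd ℂ) a * (a * ⟪x, T x⟫_ℂ) := by
        rw [_root_.map_smul, inner_smul_left, inner_smul_right]
      rw [h2] at h1
      have h3 : ‖(starRingEnd ℂ) a * (a * ⟪x, T x⟫_ℂ)‖
          = ‖x‖⁻¹ * (‖x‖⁻¹ * ‖⟪x, T x⟫_ℂ‖) := by
        rw [norm_mul, norm_mul, Complex.norm_conj, ha, Complex.norm_real, Real.norm_eq_abs,
          _root_.abs_of_pos (inv_pos.mpr hnx)]
      rw [h3] at h1
      have h4 : ‖⟪x, T x⟫_ℂ‖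
          = ‖x‖ ^ 2 * (‖x‖⁻¹ * (‖x‖⁻¹ * ‖⟪x, T x⟫_ℂ‖)) := by
        field_simp
      calc ‖⟪x, T x⟫_ℂ‖
          = ‖x‖ ^ 2 * (‖x‖⁻¹ * (‖x‖⁻¹ * ‖⟪x, T x⟫_ℂ‖)) := h4
        _ ≤ ‖x‖ ^ 2 * r := mul_le_mul_of_nonneg_left h1 (sq_nonneg _)
        _ = r * ‖x‖ ^ 2 := mul_comm _ _
  show sSup {s : ℝ | ∃ x : EuclideanSpace ℂ (Fin N), ‖x‖ = 1 ∧
      s = ‖⟪x, Matrix.toEuclideanLin (B ^ m) x⟫_ℂ‖} ≤ r ^ m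
  apply Real.sSup_le
  · rintro s ⟨x, hx, rfl⟩
    have hpow : Matrix.toEuclideanLin (B ^ m) x = (T ^ m) x := by
      rw [← Matrix.coe_toEuclideanCLM_eq_toEuclideanLin, hT, map_pow]
      rfl
    rw [hpow]
    have hε : ∀ ε : ℝ, 0 < ε → ‖⟪x, (T ^ m) x⟫_ℂ‖ ≤ (r + ε) ^ m := by
      intro ε hεpos
      have hrε : 0 < r + ε := by linarith
      set a : ℂ := (((r + ε)⁻¹ : ℝ) : ℂ) with ha
      have haabs : ‖a‖ = (r + ε)⁻¹ := by
        rw [ha, Complex.norm_real, Real.norm_eq_abs, _root_.abs_of_pos (inv_pos.mpr hrε)]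
      have hH : ∀ y : EuclideanSpace ℂ (Fin N), ‖⟪y, (a • T) y⟫_ℂ‖ ≤ ‖y‖ ^ 2 := by
        intro y
        rw [ContinuousLinearMap.smul_apply, inner_smul_right, norm_mul, haabs]
        calc (r + ε)⁻¹ * ‖⟪y, T y⟫_ℂ‖
            ≤ (r + ε)⁻¹ * (r * ‖y‖ ^ 2) :=
              mul_le_mul_of_nonneg_left (hTr y) (by positivity)
          _ ≤ ‖y‖ ^ 2 := by
              rw [← mul_assoc]
              have h5 : (r + ε)⁻¹ * r ≤ 1 := by
                rw [inv_mul_le_iff₀ hrε]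
                linarith
              nlinarith [sq_nonneg ‖y‖]
      have hcore := core (a • T) hH hm x
      have hsm : ((a • T) ^ m) x = a ^ m • (T ^ m) x := by
        rw [smul_pow, ContinuousLinearMap.smul_apply]
      rw [hsm, inner_smul_right, norm_mul, norm_pow, haabs, hx,
        one_pow] at hcore
      calc ‖⟪x, (T ^ m) x⟫_ℂ‖
          = (r + ε) ^ m * ((r + ε)⁻¹ ^ m * ‖⟪x, (T ^ m) x⟫_ℂ‖) := by
            rw [← mul_assoc, ← mul_pow, mul_inv_cancel₀ hrε.ne', one_pow, one_mul]
        _ ≤ (r + ε) ^ m * 1 := mul_le_mul_of_nonneg_left hcore (by positivity)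
        _ = (r + ε) ^ m := mul_one _
    have hlim : Filter.Tendsto (fun ε : ℝ => (r + ε) ^ m)
        (nhdsWithin 0 (Set.Ioi 0)) (nhds (r ^ m)) := by
      have hc : Continuous fun ε : ℝ => (r + ε) ^ m := by continuity
      have h6 := hc.tendsto 0
      simp only [add_zero] at h6
      exact h6.mono_left nhdsWithin_le_nhds
    exact ge_of_tendsto hlim (eventually_nhdsWithin_of_forall fun ε hεpos => hε ε hεpos)
  · exact pow_nonneg hr0 m
end

section
/- For any square matrix B over the complex numbers and any natural number m ≥ 1, ‖B^m‖_op^{1/m} ≤ 2^{1/m} · r₊(B). -/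
open Complex Matrix
open scoped InnerProductSpace

section AuxNumRad
open Polynomial

private theorem polyAux1 (m : ℕ) (hm : 0 < m) :
    ∏ ζ ∈ nthRootsFinset m (1 : ℂ), (1 - C ζ * X) = 1 - X ^ m := by
  have hω := Complex.isPrimitiveRoot_exp m hm.ne'
  apply Polynomial.funext
  intro t
  simp only [eval_prod, eval_sub, eval_one, eval_mul, eval_C, eval_X, eval_pow]
  rcases eq_or_ne t 0 with rfl | ht
  · simp [zero_pow hm.ne']
  · have hcard : (nthRootsFinset m (1 : ℂ)).card = m := hω.card_nthRootsFinset
    have hfact := X_pow_sub_one_eq_prod hm hω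
    have heval := congrArg (eval t⁻¹) hfact
    simp only [eval_sub, eval_pow, eval_one, eval_prod, eval_X, eval_C] at heval
    calc ∏ ζ ∈ nthRootsFinset m (1 : ℂ), (1 - ζ * t)
        = ∏ ζ ∈ nthRootsFinset m (1 : ℂ), (t * (t⁻¹ - ζ)) := by
          apply Finset.prod_congr rfl; intro ζ _; field_simp
      _ = t ^ m * ((t⁻¹) ^ m - 1) := by
          rw [Finset.prod_mul_distrib, Finset.prod_const, hcard, ← heval]
      _ = 1 - t ^ m := by rw [inv_pow, mul_sub, mul_inv_cancel₀ (pow_ne_zero _ ht), mul_one]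

private theorem derProdFinsetAux {s : Finset ℂ} {f : ℂ → ℂ[X]} :
    derivative (∏ i ∈ s, f i) = ∑ i ∈ s, (∏ j ∈ s.erase i, f j) * derivative (f i) := by
  classical
  rw [Finset.prod_eq_multiset_prod, derivative_prod, Finset.sum_eq_multiset_sum]
  congr 1

private theorem polyAux2 (m : ℕ) (hm : 0 < m) :
    ∑ ζ ∈ nthRootsFinset m (1 : ℂ), ∏ ξ ∈ (nthRootsFinset m (1 : ℂ)).erase ζ, (1 - C ξ * X)
      = C (m : ℂ) := by
  classical
  have hω := Complex.isPrimitiveRoot_exp m hm.ne'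
  have hcard : (nthRootsFinset m (1 : ℂ)).card = m := hω.card_nthRootsFinset
  have hP := polyAux1 m hm
  have hder : ∑ ζ ∈ nthRootsFinset m (1 : ℂ),
      C ζ * ∏ ξ ∈ (nthRootsFinset m (1 : ℂ)).erase ζ, (1 - C ξ * X)
      = C (m : ℂ) * X ^ (m - 1) := by
    have h0 := congrArg derivative hP
    rw [derProdFinsetAux] at h0
    simp only [derivative_sub, derivative_one, derivative_mul, derivative_C, derivative_X,
      derivative_X_pow, zero_sub, zero_mul, mul_one, zero_add] at h0
    have h2 : ∑ ζ ∈ nthRootsFinset m (1 : ℂ),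
        (∏ ξ ∈ (nthRootsFinset m (1 : ℂ)).erase ζ, (1 - C ξ * X)) * -C ζ
        = -(C (m : ℂ) * X ^ (m - 1)) := by
      simpa using h0
    calc ∑ ζ ∈ nthRootsFinset m (1 : ℂ), C ζ * ∏ ξ ∈ (nthRootsFinset m (1 : ℂ)).erase ζ, (1 - C ξ * X)
        = -∑ ζ ∈ nthRootsFinset m (1 : ℂ),
            (∏ ξ ∈ (nthRootsFinset m (1 : ℂ)).erase ζ, (1 - C ξ * X)) * -C ζ := by
          rw [← Finset.sum_neg_distrib]; apply Finset.sum_congr rfl; intro ζ _; ring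
      _ = C (m : ℂ) * X ^ (m - 1) := by rw [h2, neg_neg]
  have key : ∀ ζ ∈ nthRootsFinset m (1 : ℂ),
      C ζ * X * ∏ ξ ∈ (nthRootsFinset m (1 : ℂ)).erase ζ, (1 - C ξ * X)
      = (∏ ξ ∈ (nthRootsFinset m (1 : ℂ)).erase ζ, (1 - C ξ * X)) - (1 - X ^ m) := by
    intro ζ hζ
    have h3 := Finset.mul_prod_erase _ (fun ξ => (1 - C ξ * X)) hζ
    rw [hP] at h3
    linear_combination -h3
  have hsum : X * ∑ ζ ∈ nthRootsFinset m (1 : ℂ),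
      C ζ * ∏ ξ ∈ (nthRootsFinset m (1 : ℂ)).erase ζ, (1 - C ξ * X)
      = (∑ ζ ∈ nthRootsFinset m (1 : ℂ), ∏ ξ ∈ (nthRootsFinset m (1 : ℂ)).erase ζ, (1 - C ξ * X))
        - (nthRootsFinset m (1 : ℂ)).card • (1 - X ^ m) := by
    rw [Finset.mul_sum, ← Finset.sum_const, ← Finset.sum_sub_distrib]
    apply Finset.sum_congr rfl
    intro ζ hζ
    rw [← key ζ hζ]; ring
  rw [hder, hcard] at hsum
  have hX : X * (C (m : ℂ) * X ^ (m - 1)) = C (m : ℂ) * X ^ m := by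
    rw [mul_left_comm, ← pow_succ', Nat.sub_add_cancel hm]
  rw [hX] at hsum
  have hns : (m : ℕ) • ((1 : ℂ[X]) - X ^ m) = C (m : ℂ) * (1 - X ^ m) := by
    simp [nsmul_eq_mul]
  rw [hns] at hsum
  linear_combination -hsum

private theorem absRootAux {m : ℕ} (hm : 0 < m) {ζ : ℂ} (hζ : ζ ∈ nthRootsFinset m (1 : ℂ)) :
    ‖ζ‖ = 1 := by
  have h1 : ζ ^ m = 1 := (mem_nthRootsFinset hm 1).mp hζ
  have h2 : (‖ζ‖) ^ m = 1 := by
    rw [← norm_pow, h1, norm_one]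
  rcases lt_trichotomy (‖ζ‖) 1 with h | h | h
  · exfalso
    have := pow_lt_one₀ (norm_nonneg ζ) h hm.ne'
    rw [h2] at this; exact lt_irrefl 1 this
  · exact h
  · exfalso
    have := one_lt_pow₀ h hm.ne'
    rw [h2] at this; exact lt_irrefl 1 this

set_option maxHeartbeats 1000000 in
private theorem coreStepAux {N m : ℕ} (hm : 0 < m)
    (T : EuclideanSpace ℂ (Fin N) →L[ℂ] EuclideanSpace ℂ (Fin N))
    (hT : ∀ x, ‖⟪x, T x⟫_ℂ‖ ≤ ‖x‖ ^ 2) (u : EuclideanSpace ℂ (Fin N))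
    (w : ℂ) (hw : ‖w‖ < 1) :
    (w * ⟪u, (T ^ m) u⟫_ℂ).re ≤ ‖u‖ ^ 2 := by
  classical
  obtain ⟨z, hz⟩ := IsAlgClosed.exists_pow_nat_eq w hm
  have hzabs : ‖z‖ < 1 := by
    by_contra h
    push_neg at h
    have h1 : (1:ℝ) ≤ (‖z‖) ^ m := one_le_pow₀ h
    rw [← norm_pow, hz] at h1
    linarith
  have hre9 : ∀ (r : ℝ) (d : ℂ), ((r:ℂ) ^ 2 - d).re = r ^ 2 - d.re := by
    intro r d
    simp [Complex.sub_re, ← Complex.ofReal_pow]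
  set A : ℂ[X] →ₐ[ℂ] (EuclideanSpace ℂ (Fin N) →L[ℂ] EuclideanSpace ℂ (Fin N)) :=
    Polynomial.aeval (z • T) with hA
  set v := u - w • (T ^ m) u with hv
  have hA1 : ∀ a : ℂ, A (1 - C a * X) = 1 - (a * z) • T := by
    intro a
    simp [hA, Algebra.algebraMap_eq_smul_one, smul_mul_assoc, smul_smul]
  have hA2 : A (1 - X ^ m) = 1 - w • (T ^ m) := by
    rw [hA, _root_.map_sub, _root_.map_one, _root_.map_pow, Polynomial.aeval_X, _root_.smul_pow, hz]
  have h1 : ∀ ζ ∈ nthRootsFinset m (1 : ℂ),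
      (1 - (ζ * z) • T) ((A (∏ ξ ∈ (nthRootsFinset m (1 : ℂ)).erase ζ, (1 - C ξ * X))) u) = v := by
    intro ζ hζ
    have hp : (1 - C ζ * X) * (∏ ξ ∈ (nthRootsFinset m (1 : ℂ)).erase ζ, (1 - C ξ * X))
        = 1 - X ^ m := by
      have := Finset.mul_prod_erase (nthRootsFinset m (1 : ℂ)) (fun ξ => 1 - C ξ * X) hζ
      rw [this, polyAux1 m hm]
    have hq := congrArg A hp
    rw [_root_.map_mul, hA1, hA2] at hq
    rw [← ContinuousLinearMap.mul_apply, hq]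
    rw [ContinuousLinearMap.sub_apply, ContinuousLinearMap.one_apply,
      ContinuousLinearMap.smul_apply]
  have h2 : ∑ ζ ∈ nthRootsFinset m (1 : ℂ),
      (A (∏ ξ ∈ (nthRootsFinset m (1 : ℂ)).erase ζ, (1 - C ξ * X))) u = (m : ℂ) • u := by
    have hq := congrArg A (polyAux2 m hm)
    rw [_root_.map_sum] at hq
    have h3 : A (C (m : ℂ))
        = (m : ℂ) • (1 : EuclideanSpace ℂ (Fin N) →L[ℂ] EuclideanSpace ℂ (Fin N)) := by
      rw [hA, Polynomial.aeval_C, Algebra.algebraMap_eq_smul_one]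
    rw [h3] at hq
    rw [← ContinuousLinearMap.sum_apply, hq, ContinuousLinearMap.smul_apply,
      ContinuousLinearMap.one_apply]
  have h3 : ∀ ζ ∈ nthRootsFinset m (1 : ℂ),
      0 ≤ (⟪(A (∏ ξ ∈ (nthRootsFinset m (1 : ℂ)).erase ζ, (1 - C ξ * X))) u, v⟫_ℂ).re := by
    intro ζ hζ
    rw [← h1 ζ hζ]
    set y := (A (∏ ξ ∈ (nthRootsFinset m (1 : ℂ)).erase ζ, (1 - C ξ * X))) u with hy
    have hc : ⟪y, (1 - (ζ * z) • T) y⟫_ℂ = (‖y‖:ℂ) ^ 2 - (ζ * z) * ⟪y, T y⟫_ℂ := by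
      rw [ContinuousLinearMap.sub_apply, ContinuousLinearMap.one_apply,
        ContinuousLinearMap.smul_apply, inner_sub_right, inner_smul_right,
        inner_self_eq_norm_sq_to_K]
      norm_num
    rw [hc]
    have hre : ((ζ * z) * ⟪y, T y⟫_ℂ).re ≤ ‖z‖ * ‖y‖ ^ 2 := by
      calc ((ζ * z) * ⟪y, T y⟫_ℂ).re ≤ ‖((ζ * z) * ⟪y, T y⟫_ℂ)‖ := Complex.re_le_norm _
        _ = ‖ζ‖ * ‖z‖ * ‖⟪y, T y⟫_ℂ‖ := by
            rw [norm_mul, norm_mul]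
        _ = ‖z‖ * ‖⟪y, T y⟫_ℂ‖ := by rw [absRootAux hm hζ, one_mul]
        _ ≤ ‖z‖ * ‖y‖ ^ 2 :=
            mul_le_mul_of_nonneg_left (hT y) (norm_nonneg z)
    rw [hre9]
    nlinarith [sq_nonneg ‖y‖, norm_nonneg z]
  have h4 : 0 ≤ (⟪u, v⟫_ℂ).re := by
    have h5 : 0 ≤ (⟪(m : ℂ) • u, v⟫_ℂ).re := by
      rw [← h2, sum_inner, Complex.re_sum]
      exact Finset.sum_nonneg h3
    have h6 : ⟪(m : ℂ) • u, v⟫_ℂ = (m : ℂ) * ⟪u, v⟫_ℂ := by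
      rw [inner_smul_left]
      norm_num
    rw [h6] at h5
    have h7 : ((m : ℂ) * ⟪u, v⟫_ℂ).re = (m : ℝ) * (⟪u, v⟫_ℂ).re := by
      simp [Complex.mul_re]
    rw [h7] at h5
    by_contra hneg
    push_neg at hneg
    have hmpos : (0:ℝ) < m := by exact_mod_cast hm
    have := mul_neg_of_pos_of_neg hmpos hneg
    linarith
  have h8 : ⟪u, v⟫_ℂ = (‖u‖:ℂ) ^ 2 - w * ⟪u, (T ^ m) u⟫_ℂ := by
    rw [hv, inner_sub_right, inner_smul_right, inner_self_eq_norm_sq_to_K]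
    norm_num
  rw [h8, hre9] at h4
  linarith

private theorem coreAux {N m : ℕ} (hm : 0 < m)
    (T : EuclideanSpace ℂ (Fin N) →L[ℂ] EuclideanSpace ℂ (Fin N))
    (hT : ∀ x, ‖⟪x, T x⟫_ℂ‖ ≤ ‖x‖ ^ 2) (u : EuclideanSpace ℂ (Fin N)) :
    ‖⟪u, (T ^ m) u⟫_ℂ‖ ≤ ‖u‖ ^ 2 := by
  set c := ⟪u, (T ^ m) u⟫_ℂ with hc
  rcases eq_or_ne c 0 with h0 | h0
  · rw [h0]
    simpa using sq_nonneg ‖u‖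
  have habs : 0 < ‖c‖ := norm_pos_iff.mpr h0
  have key : ∀ ε : ℝ, 0 < ε → ‖c‖ ^ 2 ≤ ‖u‖ ^ 2 * (‖c‖ + ε) := by
    intro ε hε
    set t : ℝ := ‖c‖ / (‖c‖ + ε) with ht
    have htpos : 0 < t := div_pos habs (by linarith)
    have htlt : t < 1 := by
      rw [ht, div_lt_one (by linarith)]
      linarith
    set w : ℂ := (t / ‖c‖ : ℝ) * (starRingEnd ℂ) c with hwdef
    have hwabs : ‖w‖ < 1 := by
      rw [hwdef, norm_mul, Complex.norm_conj, Complex.norm_real, Real.norm_eq_abs]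
      rw [abs_of_pos (div_pos htpos habs)]
      rw [div_mul_cancel₀ _ habs.ne']
      exact htlt
    have hwc : (w * c).re = t * ‖c‖ := by
      rw [hwdef, mul_assoc]
      rw [← Complex.normSq_eq_conj_mul_self]
      rw [← Complex.ofReal_mul]
      rw [Complex.ofReal_re]
      rw [Complex.normSq_eq_norm_sq]
      field_simp
    have := coreStepAux hm T hT u w hwabs
    rw [hwc] at this
    have h2 : t * ‖c‖ * (‖c‖ + ε) = ‖c‖ ^ 2 := by
      rw [ht]
      field_simp
    calc ‖c‖ ^ 2 = t * ‖c‖ * (‖c‖ + ε) := h2.symm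
      _ ≤ ‖u‖ ^ 2 * (‖c‖ + ε) := by
          apply mul_le_mul_of_nonneg_right this (by linarith)
  have h3 : ‖c‖ ^ 2 ≤ ‖u‖ ^ 2 * ‖c‖ := by
    apply le_of_forall_pos_le_add
    intro ε hε
    have hε2 : 0 < ε / (‖u‖ ^ 2 + 1) := by positivity
    have := key _ hε2
    have h4 : ‖u‖ ^ 2 * (ε / (‖u‖ ^ 2 + 1)) ≤ ε := by
      rw [mul_div_assoc']
      rw [div_le_iff₀ (by positivity)]
      nlinarith [sq_nonneg ‖u‖]
    nlinarith [sq_nonneg ‖u‖]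
  calc ‖c‖ = ‖c‖ ^ 2 / ‖c‖ := by field_simp [sq]
    _ ≤ ‖u‖ ^ 2 * ‖c‖ / ‖c‖ := by
        gcongr
    _ = ‖u‖ ^ 2 := by field_simp

private theorem normLeTwoMulAux {N : ℕ} (G : EuclideanSpace ℂ (Fin N) →L[ℂ] EuclideanSpace ℂ (Fin N))
    (a : ℝ) (ha : 0 ≤ a) (h : ∀ u, ‖⟪u, G u⟫_ℂ‖ ≤ a * ‖u‖ ^ 2) :
    ‖G‖ ≤ 2 * a := by
  have habs : ∀ u, ‖⟪G u, u⟫_ℂ‖ ≤ a * ‖u‖ ^ 2 := by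
    intro u
    rw [← inner_conj_symm (G u) u, Complex.norm_conj]
    exact h u
  have step1 : ∀ x y, ‖⟪G y, x⟫_ℂ‖ ≤ a * (‖x‖ ^ 2 + ‖y‖ ^ 2) := by
    intro x y
    have hp := inner_map_polarization (G : EuclideanSpace ℂ (Fin N) →ₗ[ℂ] EuclideanSpace ℂ (Fin N)) x y
    simp only [ContinuousLinearMap.coe_coe] at hp
    rw [hp]
    have e1 := habs (x + y)
    have e2 := habs (x - y)
    have e3 := habs (x + Complex.I • y)
    have e4 := habs (x - Complex.I • y)
    have hpar1 : ‖x + y‖ ^ 2 + ‖x - y‖ ^ 2 = 2 * (‖x‖ ^ 2 + ‖y‖ ^ 2) := by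
      have := parallelogram_law_with_norm ℂ x y
      nlinarith [this]
    have hpar2 : ‖x + Complex.I • y‖ ^ 2 + ‖x - Complex.I • y‖ ^ 2
        = 2 * (‖x‖ ^ 2 + ‖y‖ ^ 2) := by
      have := parallelogram_law_with_norm ℂ x (Complex.I • y)
      rw [norm_smul, Complex.norm_I, one_mul] at this
      nlinarith [this]
    calc ‖((⟪G (x + y), x + y⟫_ℂ - ⟪G (x - y), x - y⟫_ℂ +
            Complex.I * ⟪G (x + Complex.I • y), x + Complex.I • y⟫_ℂ -
          Complex.I * ⟪G (x - Complex.I • y), x - Complex.I • y⟫_ℂ) / 4)‖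
        ≤ (‖⟪G (x + y), x + y⟫_ℂ‖ + ‖⟪G (x - y), x - y⟫_ℂ‖ +
           ‖⟪G (x + Complex.I • y), x + Complex.I • y⟫_ℂ‖ +
           ‖⟪G (x - Complex.I • y), x - Complex.I • y⟫_ℂ‖) / 4 := by
          rw [norm_div]
          simp only [Complex.norm_ofNat]
          gcongr
          calc ‖_‖ ≤ ‖(⟪G (x + y), x + y⟫_ℂ - ⟪G (x - y), x - y⟫_ℂ +
              Complex.I * ⟪G (x + Complex.I • y), x + Complex.I • y⟫_ℂ)‖
              + ‖(Complex.I * ⟪G (x - Complex.I • y), x - Complex.I • y⟫_ℂ)‖ :=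
                norm_sub_le _ _
            _ ≤ (‖(⟪G (x + y), x + y⟫_ℂ - ⟪G (x - y), x - y⟫_ℂ)‖
              + ‖(Complex.I * ⟪G (x + Complex.I • y), x + Complex.I • y⟫_ℂ)‖)
              + ‖(Complex.I * ⟪G (x - Complex.I • y), x - Complex.I • y⟫_ℂ)‖ := by
                gcongr
                exact norm_add_le _ _
            _ ≤ _ := by
                rw [norm_mul, norm_mul, Complex.norm_I, one_mul, one_mul]
                gcongr
                exact norm_sub_le _ _
      _ ≤ (a * ‖x + y‖ ^ 2 + a * ‖x - y‖ ^ 2 + a * ‖x + Complex.I • y‖ ^ 2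
            + a * ‖x - Complex.I • y‖ ^ 2) / 4 := by gcongr
      _ = a * (‖x + y‖ ^ 2 + ‖x - y‖ ^ 2 + (‖x + Complex.I • y‖ ^ 2
            + ‖x - Complex.I • y‖ ^ 2)) / 4 := by ring
      _ = a * (‖x‖ ^ 2 + ‖y‖ ^ 2) := by rw [hpar1, hpar2]; ring
  have step2 : ∀ x y, ‖⟪G y, x⟫_ℂ‖ ≤ 2 * a * (‖x‖ * ‖y‖) := by
    intro x y
    rcases eq_or_ne x 0 with rfl | hx
    · simp
    rcases eq_or_ne y 0 with rfl | hy
    · simp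
    have hxn : 0 < ‖x‖ := norm_pos_iff.mpr hx
    have hyn : 0 < ‖y‖ := norm_pos_iff.mpr hy
    set l : ℝ := Real.sqrt (‖y‖ / ‖x‖) with hl
    have hlpos : 0 < l := Real.sqrt_pos.mpr (div_pos hyn hxn)
    have hlsq : l ^ 2 = ‖y‖ / ‖x‖ := Real.sq_sqrt (div_pos hyn hxn).le
    have key := step1 ((l:ℂ) • x) (((l:ℂ))⁻¹ • y)
    have hsm : (G (((l:ℂ))⁻¹ • y)) = ((l:ℂ))⁻¹ • G y := _root_.map_smul G _ _
    rw [hsm, inner_smul_left, inner_smul_right, norm_mul, norm_mul] at key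
    have habsl : ‖((starRingEnd ℂ) (((l:ℂ))⁻¹))‖ = l⁻¹ := by
      rw [Complex.norm_conj, norm_inv, Complex.norm_real, Real.norm_eq_abs, abs_of_pos hlpos]
    have habsl2 : ‖((l:ℂ))‖ = l := by rw [Complex.norm_real, Real.norm_eq_abs, abs_of_pos hlpos]
    rw [habsl, habsl2] at key
    have hnx : ‖(l:ℂ) • x‖ = l * ‖x‖ := by
      rw [norm_smul, Complex.norm_real, Real.norm_eq_abs, abs_of_pos hlpos]
    have hny : ‖((l:ℂ))⁻¹ • y‖ = l⁻¹ * ‖y‖ := by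
      rw [norm_smul, norm_inv, Complex.norm_real, Real.norm_eq_abs, abs_of_pos hlpos]
    rw [hnx, hny] at key
    have hl2 : l⁻¹ * (l * ‖⟪G y, x⟫_ℂ‖) = ‖⟪G y, x⟫_ℂ‖ := by
      field_simp
    rw [hl2] at key
    have hr : (l * ‖x‖) ^ 2 + (l⁻¹ * ‖y‖) ^ 2 = 2 * (‖x‖ * ‖y‖) := by
      rw [mul_pow, mul_pow, inv_pow, hlsq]
      field_simp
      ring
    rw [hr] at key
    linarith
  apply G.opNorm_le_bound (by linarith)
  intro y
  rcases eq_or_ne (G y) 0 with h0 | h0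
  · rw [h0, norm_zero]; positivity
  have h1 := step2 (G y) y
  have h2 : ‖⟪G y, G y⟫_ℂ‖ = ‖G y‖ ^ 2 := by
    rw [inner_self_eq_norm_sq_to_K, norm_pow]
    norm_num
  rw [h2] at h1
  have h3 : 0 < ‖G y‖ := norm_pos_iff.mpr h0
  calc ‖G y‖ = ‖G y‖ ^ 2 / ‖G y‖ := by field_simp [sq]
    _ ≤ 2 * a * (‖G y‖ * ‖y‖) / ‖G y‖ := by gcongr
    _ = 2 * a * ‖y‖ := by field_simp

end AuxNumRad

/-- ‖B^m‖_op^{1/m} ≤ 2^{1/m} ⬝ r₊(B) for every m ≥ 1. -/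
theorem opNorm_pow_rpow_le {N : ℕ} (B : Matrix (Fin N) (Fin N) ℂ) (m : ℕ) (hm : 1 ≤ m) :
    (opNorm (B ^ m)) ^ ((1 : ℝ) / m) ≤ (2 : ℝ) ^ ((1 : ℝ) / m) * numRadius B := by
  have hm0 : 0 < m := hm
  have hmR : (0:ℝ) < (1:ℝ) / m := by positivity
  set T := Matrix.toEuclideanCLM (𝕜 := ℂ) B with hTdef
  have hTx : ∀ x : EuclideanSpace ℂ (Fin N), Matrix.toEuclideanLin B x = T x := by
    intro x
    rw [hTdef]
    exact (LinearMap.congr_fun (Matrix.coe_toEuclideanCLM_eq_toEuclideanLin (A := B)) x).symm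
  have hop : opNorm (B ^ m) = ‖T ^ m‖ := by
    rw [opNorm, map_pow]
  rcases Nat.eq_zero_or_pos N with hN | hN
  · -- trivial case N = 0
    subst hN
    have hzero : ∀ x : EuclideanSpace ℂ (Fin 0), x = 0 := by
      intro x
      ext i
      exact i.elim0
    have hTnorm : ‖T ^ m‖ ≤ 0 := by
      apply ContinuousLinearMap.opNorm_le_bound _ le_rfl
      intro x
      rw [hzero x]
      simp
    have h1 : opNorm (B ^ m) = 0 := le_antisymm (hop ▸ hTnorm) (by rw [opNorm]; positivity)
    have h2 : numRadius B = 0 := by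
      rw [numRadius]
      convert Real.sSup_empty
      rw [Set.eq_empty_iff_forall_notMem]
      rintro r ⟨x, hx, -⟩
      rw [hzero x, norm_zero] at hx
      norm_num at hx
    rw [h1, h2, Real.zero_rpow hmR.ne']
    norm_num
  -- main case
  set R := numRadius B with hR
  set SetR := {r : ℝ | ∃ x : EuclideanSpace ℂ (Fin N), ‖x‖ = 1 ∧
    r = ‖⟪x, Matrix.toEuclideanLin B x⟫_ℂ‖} with hSetR
  have hBdd : BddAbove SetR := by
    refine ⟨‖T‖, ?_⟩
    rintro ρ ⟨x, hx, rfl⟩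
    rw [hTx x]
    calc ‖⟪x, T x⟫_ℂ‖ = ‖⟪x, T x⟫_ℂ‖ := rfl
      _ ≤ ‖x‖ * ‖T x‖ := norm_inner_le_norm x (T x)
      _ ≤ ‖x‖ * (‖T‖ * ‖x‖) := by gcongr; exact T.le_opNorm x
      _ = ‖T‖ := by rw [hx]; ring
  have hr0 : 0 ≤ R := by
    set x₀ : EuclideanSpace ℂ (Fin N) := EuclideanSpace.single (⟨0, hN⟩ : Fin N) (1:ℂ) with hx₀
    have hx₀n : ‖x₀‖ = 1 := by
      rw [hx₀, EuclideanSpace.norm_single, norm_one]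
    have hmem : ‖⟪x₀, Matrix.toEuclideanLin B x₀⟫_ℂ‖ ∈ SetR := ⟨x₀, hx₀n, rfl⟩
    calc (0:ℝ) ≤ ‖⟪x₀, Matrix.toEuclideanLin B x₀⟫_ℂ‖ := norm_nonneg _
      _ ≤ R := le_csSup hBdd hmem
  have hkey : ∀ x : EuclideanSpace ℂ (Fin N), ‖⟪x, T x⟫_ℂ‖ ≤ R * ‖x‖ ^ 2 := by
    intro x
    rcases eq_or_ne x 0 with rfl | hx
    · simp
    have hn : 0 < ‖x‖ := norm_pos_iff.mpr hx
    set y : EuclideanSpace ℂ (Fin N) := ((‖x‖⁻¹ : ℝ) : ℂ) • x with hy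
    have hyn : ‖y‖ = 1 := by
      rw [hy, norm_smul, Complex.norm_real, Real.norm_eq_abs, abs_of_pos (by positivity)]
      field_simp
    have hmem : ‖⟪y, Matrix.toEuclideanLin B y⟫_ℂ‖ ∈ SetR := ⟨y, hyn, rfl⟩
    have hle : ‖⟪y, Matrix.toEuclideanLin B y⟫_ℂ‖ ≤ R := le_csSup hBdd hmem
    rw [hTx y] at hle
    have hsc : ⟪y, T y⟫_ℂ = ((‖x‖⁻¹ : ℝ) : ℂ) * ((‖x‖⁻¹ : ℝ) : ℂ) * ⟪x, T x⟫_ℂ := by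
      rw [hy, _root_.map_smul, inner_smul_left, inner_smul_right, Complex.conj_ofReal]
      ring
    rw [hsc] at hle
    rw [norm_mul, norm_mul, Complex.norm_real, Real.norm_eq_abs,
      abs_of_pos (a := ‖x‖⁻¹) (by positivity)] at hle
    calc ‖⟪x, T x⟫_ℂ‖ = ‖x‖ ^ 2 * (‖x‖⁻¹ * ‖x‖⁻¹ * ‖⟪x, T x⟫_ℂ‖) := by
          field_simp
      _ ≤ ‖x‖ ^ 2 * R := by gcongr
      _ = R * ‖x‖ ^ 2 := by ring
  -- epsilon argument
  apply le_of_forall_pos_le_add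
  intro ε' hε'
  have h2pos : (0:ℝ) < (2:ℝ) ^ ((1:ℝ)/m) := Real.rpow_pos_of_pos (by norm_num) _
  set ε : ℝ := ε' / (2:ℝ) ^ ((1:ℝ)/m) with hε
  have hεpos : 0 < ε := by positivity
  set s : ℝ := R + ε with hs
  have hspos : 0 < s := by positivity
  set T' : EuclideanSpace ℂ (Fin N) →L[ℂ] EuclideanSpace ℂ (Fin N) :=
    ((s⁻¹ : ℝ) : ℂ) • T with hT'
  have hT'bound : ∀ x, ‖⟪x, T' x⟫_ℂ‖ ≤ ‖x‖ ^ 2 := by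
    intro x
    have : ⟪x, T' x⟫_ℂ = ((s⁻¹ : ℝ) : ℂ) * ⟪x, T x⟫_ℂ := by
      rw [hT', ContinuousLinearMap.smul_apply, inner_smul_right]
    rw [this, norm_mul, Complex.norm_real, Real.norm_eq_abs, abs_of_pos (by positivity)]
    calc s⁻¹ * ‖⟪x, T x⟫_ℂ‖ ≤ s⁻¹ * (R * ‖x‖ ^ 2) := by gcongr; exact hkey x
      _ ≤ 1 * ‖x‖ ^ 2 := by
          rw [← mul_assoc]
          gcongr
          calc s⁻¹ * R ≤ s⁻¹ * s := by gcongr; rw [hs]; linarith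
            _ = 1 := inv_mul_cancel₀ hspos.ne'
      _ = ‖x‖ ^ 2 := one_mul _
  have hcore := coreAux hm0 T' hT'bound
  have hpow : T' ^ m = ((s ^ m : ℝ)⁻¹ : ℂ) • (T ^ m) := by
    rw [hT', _root_.smul_pow]
    congr 1
    push_cast
    ring
  have hTm : ∀ u, ‖⟪u, (T ^ m) u⟫_ℂ‖ ≤ s ^ m * ‖u‖ ^ 2 := by
    intro u
    have h1 := hcore u
    rw [hpow, ContinuousLinearMap.smul_apply, inner_smul_right, norm_mul,
      norm_inv, Complex.norm_real, Real.norm_eq_abs, abs_of_pos (by positivity)] at h1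
    have hsm : (0:ℝ) < s ^ m := by positivity
    calc ‖⟪u, (T ^ m) u⟫_ℂ‖
        = s ^ m * ((s ^ m)⁻¹ * ‖⟪u, (T ^ m) u⟫_ℂ‖) := by field_simp
      _ ≤ s ^ m * ‖u‖ ^ 2 := by gcongr
  have hnorm : ‖T ^ m‖ ≤ 2 * s ^ m :=
    normLeTwoMulAux (T ^ m) (s ^ m) (by positivity) hTm
  -- rpow arithmetic
  have hfinal : (opNorm (B ^ m)) ^ ((1:ℝ)/m) ≤ (2:ℝ) ^ ((1:ℝ)/m) * s := by
    rw [hop]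
    calc ‖T ^ m‖ ^ ((1:ℝ)/m) ≤ (2 * s ^ m) ^ ((1:ℝ)/m) := by
          apply Real.rpow_le_rpow (norm_nonneg _) hnorm hmR.le
      _ = (2:ℝ) ^ ((1:ℝ)/m) * (s ^ m) ^ ((1:ℝ)/m) := by
          apply Real.mul_rpow (by norm_num) (by positivity)
      _ = (2:ℝ) ^ ((1:ℝ)/m) * s := by
          congr 1
          rw [← Real.rpow_natCast s m, ← Real.rpow_mul hspos.le]
          rw [mul_one_div, div_self (by exact_mod_cast hm0.ne'), Real.rpow_one]
  calc (opNorm (B ^ m)) ^ ((1:ℝ)/m) ≤ (2:ℝ) ^ ((1:ℝ)/m) * s := hfinal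
    _ = (2:ℝ) ^ ((1:ℝ)/m) * R + (2:ℝ) ^ ((1:ℝ)/m) * ε := by rw [hs]; ring
    _ = (2:ℝ) ^ ((1:ℝ)/m) * R + ε' := by
        rw [hε, mul_div_cancel₀ _ h2pos.ne']
end

section
/- For any square matrix B over the complex numbers, the numerical range R(B) is a convex subset of ℂ (the Toeplitz–Hausdorff theorem). -/
open Complex Matrix
open scoped InnerProductSpace

-- Phase adjustment lemma
lemma phase_exists (p q : ℂ) : ∃ c : ℂ, ‖c‖ = 1 ∧ (c * p + (starRingEnd ℂ c) * q).im = 0 := by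
  set v := p - starRingEnd ℂ q with hv_def
  have key : ∀ c : ℂ, (c * p + (starRingEnd ℂ c) * q).im = (c * v).im := by
    intro c
    have h1 : c * p + (starRingEnd ℂ c) * q
        = c * v + (c * starRingEnd ℂ q + starRingEnd ℂ (c * starRingEnd ℂ q)) := by
      simp only [_root_.map_mul, RingHomCompTriple.comp_apply, Complex.conj_conj, RingHom.id_apply, hv_def]
      ring
    rw [h1, Complex.add_im, Complex.add_conj]
    simp
  by_cases hv : v = 0
  · exact ⟨1, by simp, by rw [key]; simp [hv]⟩
  · refine ⟨(starRingEnd ℂ v) / ((‖v‖ : ℝ) : ℂ), ?_, ?_⟩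
    · rw [norm_div]
      simp [hv]
    · rw [key, div_mul_eq_mul_div, mul_comm, Complex.mul_conj]
      rw [show ((Complex.normSq v : ℂ) / ((‖v‖ : ℝ) : ℂ)) = ((Complex.normSq v / ‖v‖ : ℝ) : ℂ) by push_cast; ring]
      simp

section Key

variable {E : Type*} [NormedAddCommGroup E] [InnerProductSpace ℂ E] [FiniteDimensional ℂ E]

lemma key_unit_interval (C : E →ₗ[ℂ] E) (x y : E) (hx : ‖x‖ = 1) (hy : ‖y‖ = 1)
    (hCx : ⟪x, C x⟫_ℂ = 1) (hCy : ⟪y, C y⟫_ℂ = 0)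
    (him : (⟪x, C y⟫_ℂ + ⟪y, C x⟫_ℂ).im = 0) (p : ℝ) (hp : p ∈ Set.Icc (0:ℝ) 1) :
    ∃ u : E, ‖u‖ = 1 ∧ ⟪u, C u⟫_ℂ = (p : ℂ) := by
  set z : ℝ → E := fun t => ((1 - t : ℝ) : ℂ) • x + ((t : ℝ) : ℂ) • y with hz_def
  have hquad : ∀ t : ℝ, ⟪z t, C (z t)⟫_ℂ
      = (((1 - t)^2 : ℝ) : ℂ) + (((1 - t) * t : ℝ) : ℂ) * (⟪x, C y⟫_ℂ + ⟪y, C x⟫_ℂ) := by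
    intro t
    simp only [hz_def, map_add, _root_.map_smul, LinearMap.map_smul, inner_add_left, inner_add_right,
      inner_smul_left, inner_smul_right, Complex.conj_ofReal, hCx, hCy]
    push_cast
    ring
  have hz_ne : ∀ t ∈ Set.Icc (0:ℝ) 1, z t ≠ 0 := by
    intro t ht h0
    have h1 : ((1 - t : ℝ) : ℂ) • x = -(((t : ℝ) : ℂ) • y) :=
      eq_neg_of_add_eq_zero_left h0
    have h2 : |1 - t| = |t| := by
      have h3 : ‖((1 - t : ℝ) : ℂ) • x‖ = ‖-(((t : ℝ) : ℂ) • y)‖ := congrArg norm h1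
      rw [norm_neg, norm_smul, norm_smul, hx, hy, mul_one, mul_one,
        Complex.norm_real, Complex.norm_real] at h3
      simpa [Real.norm_eq_abs] using h3
    have ht2 : t = 1/2 := by
      rw [_root_.abs_of_nonneg (by linarith [ht.1, ht.2] : (0:ℝ) ≤ 1 - t), _root_.abs_of_nonneg ht.1] at h2
      linarith
    have hxy : x = -y := by
      rw [ht2] at h1
      norm_num at h1
      have := congrArg (fun v => (2 : ℂ) • v) h1
      simpa [smul_smul, smul_neg] using this
    rw [hxy] at hCx
    simp [hCy] at hCx
  set f : ℝ → ℝ := fun t => (⟪z t, C (z t)⟫_ℂ).re / ‖z t‖^2 with hf_def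
  have hzc : Continuous z := by
    apply Continuous.add
    · exact (Complex.continuous_ofReal.comp (continuous_const.sub continuous_id)).smul continuous_const
    · exact Complex.continuous_ofReal.smul continuous_const
  have hfc : ContinuousOn f (Set.Icc 0 1) := by
    apply ContinuousOn.div
    · exact (Complex.continuous_re.comp ((hzc.inner ((C.continuous_of_finiteDimensional).comp hzc)))).continuousOn
    · exact ((hzc.norm).pow 2).continuousOn
    · intro t ht
      exact pow_ne_zero 2 (norm_ne_zero_iff.mpr (hz_ne t ht))
  have hz0 : z 0 = x := by simp [hz_def]
  have hz1 : z 1 = y := by simp [hz_def]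
  have hf0 : f 0 = 1 := by simp [hf_def, hz0, hCx, hx]
  have hf1 : f 1 = 0 := by simp [hf_def, hz1, hCy]
  have hsub : Set.Icc (f 1) (f 0) ⊆ f '' Set.Icc 0 1 :=
    intermediate_value_Icc' zero_le_one hfc
  obtain ⟨t, ht, hft⟩ := hsub (by rw [hf0, hf1]; exact hp)
  refine ⟨((‖z t‖ : ℂ))⁻¹ • z t, ?_, ?_⟩
  · rw [norm_smul, norm_inv, Complex.norm_real, Real.norm_eq_abs,
      _root_.abs_of_nonneg (norm_nonneg _), inv_mul_cancel₀ (norm_ne_zero_iff.mpr (hz_ne t ht))]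
  · have hinner : ⟪((‖z t‖ : ℂ))⁻¹ • z t, C (((‖z t‖ : ℂ))⁻¹ • z t)⟫_ℂ
        = (((‖z t‖^2)⁻¹ : ℝ) : ℂ) * ⟪z t, C (z t)⟫_ℂ := by
      rw [LinearMap.map_smul, inner_smul_left, inner_smul_right, ← Complex.ofReal_inv, Complex.conj_ofReal]
      push_cast
      ring
    rw [hinner]
    have him_t : (⟪z t, C (z t)⟫_ℂ).im = 0 := by
      rw [hquad t]
      simp only [Complex.add_im, Complex.ofReal_im, Complex.im_ofReal_mul, him,
        mul_zero, add_zero]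
    apply Complex.ext
    · rw [Complex.re_ofReal_mul, Complex.ofReal_re, ← hft]
      simp only [hf_def]
      rw [div_eq_inv_mul]
    · rw [Complex.im_ofReal_mul, him_t, mul_zero, Complex.ofReal_im]

end Key

/-- Toeplitz–Hausdorff: the numerical range of a complex square
matrix is a convex subset of ℂ. -/
theorem numRange_convex {N : ℕ} (B : Matrix (Fin N) (Fin N) ℂ) :
    Convex ℝ (numRange B) := by
  intro a ha b hb p q hp hq hpq
  obtain ⟨x, hx, hxa⟩ := ha
  obtain ⟨y, hy, hyb⟩ := hb
  set T := Matrix.toEuclideanLin B with hT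
  by_cases hab : a = b
  · exact ⟨x, hx, by rw [hab, ← add_smul, hpq, one_smul, ← hab]; exact hxa⟩
  -- main case
  have hab' : a - b ≠ 0 := sub_ne_zero.mpr hab
  set C : EuclideanSpace ℂ (Fin N) →ₗ[ℂ] EuclideanSpace ℂ (Fin N) :=
    (a - b)⁻¹ • (T - b • LinearMap.id) with hC
  have hCval : ∀ u : EuclideanSpace ℂ (Fin N), ‖u‖ = 1 →
      ⟪u, C u⟫_ℂ = (a - b)⁻¹ * (⟪u, T u⟫_ℂ - b) := by
    intro u hu
    have huu : ⟪u, u⟫_ℂ = 1 := by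
      rw [inner_self_eq_norm_sq_to_K, hu]; norm_num
    simp only [hC, LinearMap.smul_apply, LinearMap.sub_apply, LinearMap.id_apply,
      inner_smul_right, inner_sub_right, huu, mul_one]
  have hCx : ⟪x, C x⟫_ℂ = 1 := by
    rw [hCval x hx, ← hxa, inv_mul_cancel₀ hab']
  have hCy : ⟪y, C y⟫_ℂ = 0 := by
    rw [hCval y hy, ← hyb, sub_self, mul_zero]
  -- phase adjustment
  obtain ⟨c, hc, him⟩ := phase_exists ⟪x, C y⟫_ℂ ⟪y, C x⟫_ℂ
  set y' : EuclideanSpace ℂ (Fin N) := c • y with hy'_def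
  have hy' : ‖y'‖ = 1 := by rw [hy'_def, norm_smul, hc, hy, one_mul]
  have hCy' : ⟪y', C y'⟫_ℂ = 0 := by
    rw [hy'_def, LinearMap.map_smul, inner_smul_left, inner_smul_right, hCy]
    ring
  have him' : (⟪x, C y'⟫_ℂ + ⟪y', C x⟫_ℂ).im = 0 := by
    rw [hy'_def, LinearMap.map_smul, inner_smul_right, inner_smul_left]
    exact him
  obtain ⟨u, hu, hCu⟩ := key_unit_interval C x y' hx hy' hCx hCy' him' p
    ⟨hp, by linarith⟩
  refine ⟨u, hu, ?_⟩
  have hTu : ⟪u, T u⟫_ℂ = (a - b) * (p : ℂ) + b := by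
    have h := hCval u hu
    rw [hCu] at h
    have h2 : (a - b) * (p : ℂ) = ⟪u, T u⟫_ℂ - b := by
      rw [h, ← mul_assoc, mul_inv_cancel₀ hab', one_mul]
    linear_combination -h2
  rw [hTu]
  have hq' : (q : ℝ) = 1 - p := by linarith
  rw [Complex.real_smul, Complex.real_smul, hq']
  push_cast
  ring
end
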